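/- arXiv:2601.14411 — 2 statements merged into one kernel-verified Lean document; each statement's English description precedes it below -/
import Mathlib

section
/- There is a constant C₀ > 0 such that the following holds (Frostman is inherited upwards). Let K ⊆ ℝ^n be a bounded convex set with |K| > 0, let 𝕎 be a finite family of convex subsets of K, and for each W ∈ 𝕎 let 𝕍_W be a nonempty finite family of bounded convex sets with V ⊆ W for every V ∈ 𝕍_W; set 𝕍 = ⊔_{W∈𝕎} 𝕍_W (disjoint union). Suppose C_F(𝕍,K) ≤ C, and suppose there is D > 0 with D ≤ Δ(𝕍_W, W) ≤ 2D for every W ∈ 𝕎. Then C_F(𝕎,K) ≤ C₀ · C. -/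
open MeasureTheory Metric Bornology
open scoped Classical ENNReal RealInnerProductSpace

noncomputable section

/-- Euclidean space `ℝⁿ`. -/
abbrev Space (n : ℕ) : Type := EuclideanSpace ℝ (Fin n)

/-- Lebesgue volume, as a real number. -/
def vol {n : ℕ} (A : Set (Space n)) : ℝ := (MeasureTheory.volume A).toReal

/-- A `δ`-tube in `ℝⁿ`: the closed `δ`-neighborhood of a line segment of length 1. -/
def IsTube (n : ℕ) (δ : ℝ) (T : Set (Space n)) : Prop :=
  ∃ x y : Space n, dist x y = 1 ∧ T = Metric.cthickening δ (segment ℝ x y)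

/-- The common volume of a `δ`-tube in `ℝ³`. -/
def tubeVol3 (δ : ℝ) : ℝ :=
  vol (Metric.cthickening δ
    (segment ℝ (0 : Space 3) (EuclideanSpace.single (0 : Fin 3) (1 : ℝ))))

/-- `𝕎[K]`: the members of `𝕎` contained in `K`. -/
def inSet {n : ℕ} (𝕎 : Finset (Set (Space n))) (K : Set (Space n)) :
    Finset (Set (Space n)) :=
  𝕎.filter fun W => W ⊆ K

/-- `Δ(𝕎, K) = (∑_{W ∈ 𝕎[K]} |W|) / |K|`. -/
def densIn {n : ℕ} (𝕎 : Finset (Set (Space n))) (K : Set (Space n)) : ℝ :=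
  (∑ W ∈ inSet 𝕎 K, vol W) / vol K

/-- `Δ_max(𝕎)`: the supremum of `Δ(𝕎, K)` over bounded convex `K` of positive
volume. -/
def DeltaMax {n : ℕ} (𝕎 : Finset (Set (Space n))) : ℝ :=
  sSup {r : ℝ | ∃ K : Set (Space n),
    Convex ℝ K ∧ IsBounded K ∧ 0 < vol K ∧ densIn 𝕎 K = r}

/-- `C_F(𝕍, K) = (sup_{convex K' ⊆ K} Δ(𝕍, K')) / Δ(𝕍, K)`. -/
def CFrost {n : ℕ} (𝕍 : Finset (Set (Space n))) (K : Set (Space n)) : ℝ :=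
  sSup {r : ℝ | ∃ K' : Set (Space n),
    Convex ℝ K' ∧ K' ⊆ K ∧ 0 < vol K' ∧ densIn 𝕍 K' = r} / densIn 𝕍 K

/-- `Y` is a shading of `𝕍`: each `Y V` is a measurable subset of `V`. -/
def IsShading {n : ℕ} (𝕍 : Finset (Set (Space n)))
    (Y : Set (Space n) → Set (Space n)) : Prop :=
  ∀ V ∈ 𝕍, Y V ⊆ V ∧ MeasurableSet (Y V)

/-- `U(𝕍, Y) = ⋃_{V ∈ 𝕍} Y V`. -/
def shadeUnion {n : ℕ} (𝕍 : Finset (Set (Space n)))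
    (Y : Set (Space n) → Set (Space n)) : Set (Space n) :=
  ⋃ V ∈ 𝕍, Y V

/-- `λ(𝕍, Y) = (∑ |Y V|) / (∑ |V|)`. -/
def shadeDensity {n : ℕ} (𝕍 : Finset (Set (Space n)))
    (Y : Set (Space n) → Set (Space n)) : ℝ :=
  (∑ V ∈ 𝕍, vol (Y V)) / (∑ V ∈ 𝕍, vol V)

/-- `μ(𝕍, Y) = (∑ |Y V|) / |U(𝕍, Y)|`. -/
def shadeMult {n : ℕ} (𝕍 : Finset (Set (Space n)))
    (Y : Set (Space n) → Set (Space n)) : ℝ :=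
  (∑ V ∈ 𝕍, vol (Y V)) / vol (shadeUnion 𝕍 Y)

/-- `μ(𝕍, Y)(x)`: the number of `V ∈ 𝕍` with `x ∈ Y V`. -/
def ptMult {n : ℕ} (𝕍 : Finset (Set (Space n)))
    (Y : Set (Space n) → Set (Space n)) (x : Space n) : ℕ :=
  (𝕍.filter fun V => x ∈ Y V).card

/-- The unit ball `B₁ ⊆ ℝ³`. -/
def B1 : Set (Space 3) := Metric.closedBall 0 1

/-- `𝕋` is a family of `δ`-tubes contained in the unit ball of `ℝ³`. -/
def TubesInB1 (δ : ℝ) (𝕋 : Finset (Set (Space 3))) : Prop :=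
  ∀ T ∈ 𝕋, IsTube 3 δ T ∧ T ⊆ B1

/-- The Katz–Tao Kakeya statement `K_KT(β)`. -/
def KKT (β : ℝ) : Prop :=
  ∀ ε : ℝ, 0 < ε → ∃ η : ℝ, 0 < η ∧ ∃ δ₀ : ℝ, 0 < δ₀ ∧
    ∀ δ : ℝ, 0 < δ → δ ≤ δ₀ →
      ∀ (𝕋 : Finset (Set (Space 3))) (Y : Set (Space 3) → Set (Space 3)),
        TubesInB1 δ 𝕋 → IsShading 𝕋 Y →
        DeltaMax 𝕋 ≤ δ ^ (-η) → δ ^ η ≤ shadeDensity 𝕋 Y →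
        shadeMult 𝕋 Y ≤ δ ^ (-ε) * (𝕋.card : ℝ) ^ β

/-- The Frostman Kakeya statement `K_F(β)`. -/
def KF (β : ℝ) : Prop :=
  ∀ ε : ℝ, 0 < ε → ∃ η : ℝ, 0 < η ∧ ∃ δ₀ : ℝ, 0 < δ₀ ∧
    ∀ δ : ℝ, 0 < δ → δ ≤ δ₀ →
      ∀ (𝕋 : Finset (Set (Space 3))) (Y : Set (Space 3) → Set (Space 3)),
        TubesInB1 δ 𝕋 → IsShading 𝕋 Y →
        CFrost 𝕋 B1 ≤ δ ^ (-η) → δ ^ η ≤ shadeDensity 𝕋 Y →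
        shadeMult 𝕋 Y ≤ δ ^ (-ε) * δ ^ (-(2*β)) *
          ((𝕋.card : ℝ) * tubeVol3 δ) ^ (1 - β/2)

/-- `R` is a rotated rectangular box with side lengths `v 0, …, v (n-1)`. -/
def IsRotatedBox (n : ℕ) (v : Fin n → ℝ) (R : Set (Space n)) : Prop :=
  ∃ e : Space n ≃ᵢ Space n,
    R = e '' {p : Space n | ∀ i, p i ∈ Set.Icc (0 : ℝ) (v i)}

/-- The image of `R` under the homothety of ratio `c` about `x`. -/
def scaleAbout {n : ℕ} (x : Space n) (c : ℝ) (R : Set (Space n)) :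
    Set (Space n) :=
  (fun q => x + c • (q - x)) '' R

/-- `V` has dimensions `v 0 × ⋯ × v (n-1)` with comparability constant `C`:
it is sandwiched between a `C⁻¹`-scaled and a `C`-scaled copy (about a common
point) of some rotated rectangular box with those side lengths. -/
def HasDims (n : ℕ) (C : ℝ) (v : Fin n → ℝ) (V : Set (Space n)) : Prop :=
  ∃ R : Set (Space n), ∃ x : Space n,
    IsRotatedBox n v R ∧ scaleAbout x C⁻¹ R ⊆ V ∧ V ⊆ scaleAbout x C R

/-- The (undirected) angle between the lines spanned by `u` and `v`; in `ℝ³`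
it also equals the angle between the 2-planes orthogonal to `u` and `v`. -/
def lineAngle {n : ℕ} (u v : Space n) : ℝ :=
  min (InnerProductGeometry.angle u v) (Real.pi - InnerProductGeometry.angle u v)

/-- A `δ×1×1` slab with assigned unit normal `ν`: it is (contained in a box)
of thickness `2δ` in the direction `ν`. -/
def IsSlabN (δ : ℝ) (S : Set (Space 3)) (ν : Space 3) : Prop :=
  HasDims 3 2 ![δ, 1, 1] S ∧ ‖ν‖ = 1 ∧
    ∃ c : ℝ, ∀ p ∈ S, abs ((inner ℝ p ν : ℝ) - c) ≤ δ

/-- An `a×b×1` plank with assigned unit normal `ν`; the associated 2-plane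
`TP` is the plane orthogonal to `ν`. -/
def IsPlankN (a b : ℝ) (P : Set (Space 3)) (ν : Space 3) : Prop :=
  HasDims 3 2 ![a, b, 1] P ∧ ‖ν‖ = 1 ∧
    ∃ c : ℝ, ∀ p ∈ P, abs ((inner ℝ p ν : ℝ) - c) ≤ a

/-- `𝕋ρ` is a `ρ`-thickening of `𝕋` with constant `C`: every `T ∈ 𝕋` lies in
at least one and at most `C` tubes of `𝕋ρ`, the tubes of `𝕋ρ` are essentially
distinct, and the numbers `|𝕋[Tρ]|` agree up to a factor `C`. -/
def IsThickening (n : ℕ) (ρ C : ℝ) (𝕋 𝕋ρ : Finset (Set (Space n))) : Prop :=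
  (∀ T' ∈ 𝕋ρ, IsTube n ρ T') ∧
  (∀ T ∈ 𝕋, (∃ T' ∈ 𝕋ρ, T ⊆ T') ∧
      (((𝕋ρ.filter fun T' => T ⊆ T').card : ℝ) ≤ C)) ∧
  (∀ S : Set (Space n), IsTube n ρ S →
      (((𝕋ρ.filter fun T' => T' ⊆ S).card : ℝ) ≤ C)) ∧
  (∀ T₁ ∈ 𝕋ρ, ∀ T₂ ∈ 𝕋ρ,
      (((inSet 𝕋 T₁).card : ℝ) ≤ C * ((inSet 𝕋 T₂).card : ℝ)))

/-- The number of scales `M = ⌈log log (1/δ)⌉`. -/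
def scaleCount (δ : ℝ) : ℕ := ⌈Real.log (Real.log (1 / δ))⌉₊

/-- `𝕋` is a uniform set of `δ`-tubes (with constant `C`): it admits a
`ρ`-thickening at every scale `ρ = δ^(k/M)`, `k = 0, …, M`. -/
def IsUniformTubes (n : ℕ) (C δ : ℝ) (𝕋 : Finset (Set (Space n))) : Prop :=
  ∀ k : ℕ, k ≤ scaleCount δ →
    ∃ 𝕋ρ : Finset (Set (Space n)),
      IsThickening n (δ ^ ((k : ℝ) / (scaleCount δ : ℝ))) C 𝕋 𝕋ρ

/-- `(𝕋, Y)` is a uniform pair: `𝕋` is uniform and for each `x ∈ U(𝕋,Y)` the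
sets `{T ∈ 𝕋 : x ∈ Y T}` are uniform with roughly the same branching numbers
`N k` (up to the factor `C`). -/
def IsUniformPair (n : ℕ) (C δ : ℝ) (𝕋 : Finset (Set (Space n)))
    (Y : Set (Space n) → Set (Space n)) : Prop :=
  IsUniformTubes n C δ 𝕋 ∧
  ∃ N : ℕ → ℝ, ∀ x ∈ shadeUnion 𝕋 Y, ∀ k : ℕ, k ≤ scaleCount δ →
    ∃ 𝕋ρ : Finset (Set (Space n)),
      IsThickening n (δ ^ ((k : ℝ) / (scaleCount δ : ℝ))) C
        (𝕋.filter fun T => x ∈ Y T) 𝕋ρ ∧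
      ∀ Tρ ∈ 𝕋ρ,
        N k ≤ C * (((𝕋.filter fun T => x ∈ Y T ∧ T ⊆ Tρ).card : ℝ)) ∧
        (((𝕋.filter fun T => x ∈ Y T ∧ T ⊆ Tρ).card : ℝ)) ≤ C * N k

/-- `𝕎` factors `𝕍` (with constant `C`, common dimensions `w`, and class
assignment `g`): `𝕍 = ⊔_{W ∈ 𝕎} 𝕍_W` with `𝕍_W = {V ∈ 𝕍 : g V = W}` contained
in `W`, all `W ∈ 𝕎` of dimensions `w`, `Δ_max(𝕎) ≤ C`, each `𝕍_W` Frostman in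
`W` with `Δ(𝕍_W, W)` comparable to `Δ_max(𝕍)`. -/
def Factors (n : ℕ) (C : ℝ) (w : Fin n → ℝ) (𝕎 𝕍 : Finset (Set (Space n)))
    (g : Set (Space n) → Set (Space n)) : Prop :=
  𝕎 = 𝕍.image g ∧
  (∀ V ∈ 𝕍, V ⊆ g V) ∧
  (∀ W ∈ 𝕎, HasDims n C w W) ∧
  DeltaMax 𝕎 ≤ C ∧
  (∀ W ∈ 𝕎,
    C⁻¹ * DeltaMax 𝕍 ≤ densIn (𝕍.filter fun V => g V = W) W ∧
    densIn (𝕍.filter fun V => g V = W) W ≤ DeltaMax 𝕍 ∧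
    ∀ V ∈ 𝕍, C⁻¹ * densIn (𝕍.filter fun V => g V = W) W ≤
      ((𝕍.filter fun V => g V = W).card : ℝ) * vol V / vol W)

/-! Each `W ∈ 𝕎[K']` carries `𝕍`-mass between `D |W|` and `2D |W|`, all of it inside `K'`; by
disjointness of the `𝕍_W` this gives `D Δ(𝕎, K') ≤ Δ(𝕍, K')` for every `K' ⊆ K`, and
`Δ(𝕍, K) ≤ 2D Δ(𝕎, K)` because every `W` lies in `K`. Hence
`D Δ(𝕎, K') ≤ Δ(𝕍, K') ≤ C Δ(𝕍, K) ≤ 2CD Δ(𝕎, K)`, so one may take `C₀ = 2`. -/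

section Frostman

variable {n : ℕ}

lemma vol_nonneg (A : Set (Space n)) : 0 ≤ vol A := ENNReal.toReal_nonneg

lemma vol_mono {A B : Set (Space n)} (h : A ⊆ B) (hB : IsBounded B) : vol A ≤ vol B :=
  ENNReal.toReal_mono hB.measure_lt_top.ne (measure_mono h)

lemma inSet_eq_self {𝕍 : Finset (Set (Space n))} {K : Set (Space n)} (h : ∀ V ∈ 𝕍, V ⊆ K) :
    inSet 𝕍 K = 𝕍 :=
  Finset.filter_true_of_mem (p := (· ⊆ K)) h

lemma densIn_nonneg (𝕍 : Finset (Set (Space n))) (K : Set (Space n)) : 0 ≤ densIn 𝕍 K :=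
  div_nonneg (Finset.sum_nonneg fun V _ => vol_nonneg V) (vol_nonneg K)

lemma vol_pos_of_densIn_pos {𝕍 : Finset (Set (Space n))} {K : Set (Space n)}
    (h : 0 < densIn 𝕍 K) : 0 < vol K := by
  refine (vol_nonneg K).lt_of_ne fun hK => h.ne' ?_
  rw [densIn, ← hK, div_zero]

lemma densIn_mul_vol {𝕍 : Finset (Set (Space n))} {K : Set (Space n)} (h : ∀ V ∈ 𝕍, V ⊆ K)
    (hK : vol K ≠ 0) : densIn 𝕍 K * vol K = ∑ V ∈ 𝕍, vol V := by
  rw [densIn, inSet_eq_self h, div_mul_cancel₀ _ hK]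

lemma densIn_le_card {𝕍 : Finset (Set (Space n))} {K : Set (Space n)} (hK : IsBounded K)
    (hpos : 0 < vol K) : densIn 𝕍 K ≤ 𝕍.card := by
  rw [densIn, div_le_iff₀ hpos]
  calc ∑ V ∈ inSet 𝕍 K, vol V ≤ ∑ _V ∈ inSet 𝕍 K, vol K :=
        Finset.sum_le_sum fun V hV => vol_mono (Finset.mem_filter.mp hV).2 hK
    _ = (inSet 𝕍 K).card * vol K := by rw [Finset.sum_const, nsmul_eq_mul]
    _ ≤ 𝕍.card * vol K := by
        gcongr
        exact Finset.filter_subset _ _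

def subDensities (𝕍 : Finset (Set (Space n))) (K : Set (Space n)) : Set ℝ :=
  {r | ∃ K' : Set (Space n), Convex ℝ K' ∧ K' ⊆ K ∧ 0 < vol K' ∧ densIn 𝕍 K' = r}

lemma CFrost_eq (𝕍 : Finset (Set (Space n))) (K : Set (Space n)) :
    CFrost 𝕍 K = sSup (subDensities 𝕍 K) / densIn 𝕍 K :=
  rfl

lemma CFrost_nonneg (𝕍 : Finset (Set (Space n))) (K : Set (Space n)) : 0 ≤ CFrost 𝕍 K := by
  refine div_nonneg (Real.sSup_nonneg ?_) (densIn_nonneg 𝕍 K)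
  rintro r ⟨K', -, -, -, rfl⟩
  exact densIn_nonneg 𝕍 K'

lemma densIn_le_CFrost_mul {𝕍 : Finset (Set (Space n))} {K K' : Set (Space n)}
    (hK : IsBounded K) (hdens : 0 < densIn 𝕍 K)
    (hK'c : Convex ℝ K') (hK'K : K' ⊆ K) (hK'vol : 0 < vol K') :
    densIn 𝕍 K' ≤ CFrost 𝕍 K * densIn 𝕍 K := by
  have hbdd : BddAbove (subDensities 𝕍 K) := by
    refine ⟨𝕍.card, ?_⟩
    rintro r ⟨L, -, hLK, hLvol, rfl⟩
    exact densIn_le_card (hK.subset hLK) hLvol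
  rw [CFrost_eq, div_mul_cancel₀ _ hdens.ne']
  exact le_csSup hbdd ⟨K', hK'c, hK'K, hK'vol, rfl⟩

/-- If `Δ(𝕎, K) = 0` then `C_F(𝕎, K) = 0` by the convention `x / 0 = 0`. -/
lemma CFrost_le_of_forall_densIn_le {𝕎 : Finset (Set (Space n))} {K : Set (Space n)} {M : ℝ}
    (hM : 0 ≤ M)
    (h : 0 < densIn 𝕎 K → ∀ K' : Set (Space n), Convex ℝ K' → K' ⊆ K → 0 < vol K' →
      densIn 𝕎 K' ≤ M * densIn 𝕎 K) :
    CFrost 𝕎 K ≤ M := by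
  rcases (densIn_nonneg 𝕎 K).eq_or_lt with hzero | hpos
  · rw [CFrost_eq, ← hzero, div_zero]
    exact hM
  rw [CFrost_eq, div_le_iff₀ hpos]
  refine Real.sSup_le ?_ (by positivity)
  rintro r ⟨K', hK'c, hK'K, hK'vol, rfl⟩
  exact h hpos K' hK'c hK'K hK'vol

end Frostman

section Refinement

variable {n : ℕ} {𝕎 : Finset (Set (Space n))} {𝕍fam : Set (Space n) → Finset (Set (Space n))}

lemma mul_densIn_le_densIn_biUnion {D : ℝ} (hdisj : (𝕎 : Set (Set (Space n))).PairwiseDisjoint 𝕍fam)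
    (hsub : ∀ W ∈ 𝕎, ∀ V ∈ 𝕍fam W, V ⊆ W)
    (hlow : ∀ W ∈ 𝕎, D * vol W ≤ ∑ V ∈ 𝕍fam W, vol V) (K : Set (Space n)) :
    D * densIn 𝕎 K ≤ densIn (𝕎.biUnion 𝕍fam) K := by
  rw [densIn, densIn, ← mul_div_assoc]
  refine div_le_div_of_nonneg_right ?_ (vol_nonneg K)
  calc D * ∑ W ∈ inSet 𝕎 K, vol W = ∑ W ∈ inSet 𝕎 K, D * vol W := Finset.mul_sum ..
    _ ≤ ∑ W ∈ inSet 𝕎 K, ∑ V ∈ 𝕍fam W, vol V :=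
        Finset.sum_le_sum fun W hW => hlow W (Finset.mem_of_mem_filter W hW)
    _ = ∑ V ∈ (inSet 𝕎 K).biUnion 𝕍fam, vol V :=
        (Finset.sum_biUnion (hdisj.subset (Finset.coe_subset.mpr (Finset.filter_subset _ _)))).symm
    _ ≤ ∑ V ∈ inSet (𝕎.biUnion 𝕍fam) K, vol V := by
        refine Finset.sum_le_sum_of_subset_of_nonneg ?_ fun V _ _ => vol_nonneg V
        intro V hV
        obtain ⟨W, hW, hVW⟩ := Finset.mem_biUnion.mp hV
        obtain ⟨hW𝕎, hWK⟩ := Finset.mem_filter.mp hW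
        exact Finset.mem_filter.mpr
          ⟨Finset.mem_biUnion.mpr ⟨W, hW𝕎, hVW⟩, (hsub W hW𝕎 V hVW).trans hWK⟩

lemma densIn_biUnion_le {c : ℝ} {K : Set (Space n)}
    (hdisj : (𝕎 : Set (Set (Space n))).PairwiseDisjoint 𝕍fam)
    (hsub : ∀ W ∈ 𝕎, ∀ V ∈ 𝕍fam W, V ⊆ W) (hK : ∀ W ∈ 𝕎, W ⊆ K)
    (hup : ∀ W ∈ 𝕎, ∑ V ∈ 𝕍fam W, vol V ≤ c * vol W) :
    densIn (𝕎.biUnion 𝕍fam) K ≤ c * densIn 𝕎 K := by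
  have hVK : ∀ V ∈ 𝕎.biUnion 𝕍fam, V ⊆ K := by
    intro V hV
    obtain ⟨W, hW, hVW⟩ := Finset.mem_biUnion.mp hV
    exact (hsub W hW V hVW).trans (hK W hW)
  rw [densIn, densIn, inSet_eq_self hK, inSet_eq_self hVK, ← mul_div_assoc]
  refine div_le_div_of_nonneg_right ?_ (vol_nonneg K)
  calc ∑ V ∈ 𝕎.biUnion 𝕍fam, vol V = ∑ W ∈ 𝕎, ∑ V ∈ 𝕍fam W, vol V := Finset.sum_biUnion hdisj
    _ ≤ ∑ W ∈ 𝕎, c * vol W := Finset.sum_le_sum hup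
    _ = c * ∑ W ∈ 𝕎, vol W := (Finset.mul_sum ..).symm

end Refinement

/-- **Remark 3.3(A) (Frostman is inherited upwards)**: there is an absolute
constant `C₀ > 0` so that if `𝕍 = ⊔_{W ∈ 𝕎} 𝕍_W` is `C`-Frostman in `K`,
each `𝕍_W` nonempty with members contained in `W ⊆ K`, and the densities
`Δ(𝕍_W, W)` all lie in `[D, 2D]`, then `𝕎` is `C₀·C`-Frostman in `K`. -/
theorem frostman_inherited_upwards :
    ∃ C₀ : ℝ, 0 < C₀ ∧
      ∀ (n : ℕ) (K : Set (Space n)),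
        Convex ℝ K → IsBounded K → 0 < vol K →
        ∀ (𝕎 : Finset (Set (Space n)))
          (𝕍fam : Set (Space n) → Finset (Set (Space n))) (C D : ℝ),
          (∀ W ∈ 𝕎, Convex ℝ W ∧ W ⊆ K) →
          (∀ W ∈ 𝕎, (𝕍fam W).Nonempty ∧
            ∀ V ∈ 𝕍fam W, V ⊆ W ∧ Convex ℝ V ∧ IsBounded V) →
          (∀ W₁ ∈ 𝕎, ∀ W₂ ∈ 𝕎, W₁ ≠ W₂ → Disjoint (𝕍fam W₁) (𝕍fam W₂)) →
          CFrost (𝕎.biUnion 𝕍fam) K ≤ C →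
          0 < D →
          (∀ W ∈ 𝕎, D ≤ densIn (𝕍fam W) W ∧ densIn (𝕍fam W) W ≤ 2 * D) →
          CFrost 𝕎 K ≤ C₀ * C := by
  refine ⟨2, two_pos, ?_⟩
  intro n K _ hKbd _ 𝕎 𝕍fam C D hW h𝕍 hdisj hCF hD hDens
  have hsub : ∀ W ∈ 𝕎, ∀ V ∈ 𝕍fam W, V ⊆ W := fun W hW V hV => ((h𝕍 W hW).2 V hV).1
  have hmass : ∀ W ∈ 𝕎, densIn (𝕍fam W) W * vol W = ∑ V ∈ 𝕍fam W, vol V := fun W hW =>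
    densIn_mul_vol (hsub W hW) (vol_pos_of_densIn_pos (hD.trans_le (hDens W hW).1)).ne'
  have hlow : ∀ W ∈ 𝕎, D * vol W ≤ ∑ V ∈ 𝕍fam W, vol V := fun W hW =>
    hmass W hW ▸ mul_le_mul_of_nonneg_right (hDens W hW).1 (vol_nonneg W)
  have hup : ∀ W ∈ 𝕎, ∑ V ∈ 𝕍fam W, vol V ≤ 2 * D * vol W := fun W hW =>
    hmass W hW ▸ mul_le_mul_of_nonneg_right (hDens W hW).2 (vol_nonneg W)
  have hdisj' : (𝕎 : Set (Set (Space n))).PairwiseDisjoint 𝕍fam := fun W₁ h₁ W₂ h₂ hne =>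
    hdisj W₁ h₁ W₂ h₂ hne
  have hC : 0 ≤ C := (CFrost_nonneg _ _).trans hCF
  refine CFrost_le_of_forall_densIn_le (by positivity) fun hpos K' hK'c hK'K hK'vol => ?_
  have hlower := mul_densIn_le_densIn_biUnion hdisj' hsub hlow
  have h𝕍pos : 0 < densIn (𝕎.biUnion 𝕍fam) K := (mul_pos hD hpos).trans_le (hlower K)
  refine le_of_mul_le_mul_left ?_ hD
  calc D * densIn 𝕎 K' ≤ densIn (𝕎.biUnion 𝕍fam) K' := hlower K'
    _ ≤ CFrost (𝕎.biUnion 𝕍fam) K * densIn (𝕎.biUnion 𝕍fam) K :=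
        densIn_le_CFrost_mul hKbd h𝕍pos hK'c hK'K hK'vol
    _ ≤ C * (2 * D * densIn 𝕎 K) := by
        gcongr
        exact densIn_biUnion_le hdisj' hsub (fun W hW𝕎 => (hW W hW𝕎).2) hup
    _ = D * (2 * C * densIn 𝕎 K) := by ring
end
end

section
/- There are absolute constants C, c > 0 such that the following holds. Let 0 < δ ≤ θ ≤ 1, η > 0, and let S̃ ⊆ B₂ ⊆ ℝ³ be a θ×1×1 slab. Let 𝕊 be a finite family of δ×1×1 slabs contained in S̃, each slab S assigned a unit normal n(S), with a shading Y satisfying λ(𝕊,Y) ≥ δ^{η}. Define Tri(𝕊) = ∑_{S₁,S₂∈𝕊}|Y(S₁)∩Y(S₂)| and Tri_θ(𝕊) = ∑ over pairs S₁,S₂ ∈ 𝕊 whose angle lies in [θ/2, 2θ] of |Y(S₁)∩Y(S₂)|, where the angle between S₁ and S₂ is the angle between the 2-planes orthogonal to n(S₁) and n(S₂). If θ is a typical intersection angle in the sense that Tri_θ(𝕊) ≥ (log(1/δ))^{-C} · Tri(𝕊) > 0, then |U(𝕊,Y)| ≥ c · (log(1/δ))^{-C} · δ^{2η} · θ. 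-/
open MeasureTheory Metric Bornology
open scoped Classical ENNReal RealInnerProductSpace

noncomputable section

/-!
Every slab has volume at least `δ / 8`, so the shading carries mass
`∑ |Y S| ≥ δ^η · #𝕊 · δ / 8`. Cauchy–Schwarz for the multiplicity function `∑ 1_{Y S}` on
`U(𝕊, Y)` gives `(∑ |Y S|)² ≤ |U(𝕊, Y)| · Tri(𝕊)`. Two `δ`-slabs in `B₂` whose normals make an
angle `≥ θ / 2` meet in volume `≤ 16π δ² / θ` (in an orthonormal frame adapted to the two normals
their intersection is a sheared box), so `Tri_θ(𝕊) ≤ #𝕊² · 16π δ² / θ`. Feeding this into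
`Tri(𝕊) ≤ (log 1/δ)^C · Tri_θ(𝕊)`, the factor `#𝕊² δ²` cancels and `|U(𝕊, Y)|` is bounded below
by `(log 1/δ)^(-C) δ^(2η) θ / (1024 π)`.
-/


section Volume

variable {n : ℕ}

theorem volume_setOf_forall_mem_Icc (l r : Fin n → ℝ) :
    volume {p : Space n | ∀ i, p i ∈ Set.Icc (l i) (r i)} =
      ∏ i, ENNReal.ofReal (r i - l i) := by
  have hbox : {p : Space n | ∀ i, p i ∈ Set.Icc (l i) (r i)} =
      (MeasurableEquiv.toLp 2 (Fin n → ℝ)).symm ⁻¹' Set.univ.pi fun i => Set.Icc (l i) (r i) := by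
    ext p; simp [Pi.le_def, forall_and]
  rw [hbox, (EuclideanSpace.volume_preserving_symm_measurableEquiv_toLp (Fin n)).measure_preimage
    (MeasurableSet.univ_pi fun _ => measurableSet_Icc).nullMeasurableSet, volume_pi_pi]
  simp [Real.volume_Icc]

theorem IsRotatedBox.volume_eq {v : Fin n → ℝ} {R : Set (Space n)} (h : IsRotatedBox n v R) :
    volume R = ∏ i, ENNReal.ofReal (v i) := by
  obtain ⟨e, rfl⟩ := h
  rw [← EuclideanSpace.euclideanHausdorffMeasure_eq_volume,
    e.isometry.euclideanHausdorffMeasure_image, EuclideanSpace.euclideanHausdorffMeasure_eq_volume,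
    volume_setOf_forall_mem_Icc]
  simp

open scoped Pointwise in
theorem volume_scaleAbout (x : Space n) (c : ℝ) (R : Set (Space n)) :
    volume (scaleAbout x c R) = ENNReal.ofReal (|c| ^ n) * volume R := by
  have h : scaleAbout x c R = (x - c • x) +ᵥ c • R := by
    ext y
    simp only [scaleAbout, Set.mem_image, Set.mem_vadd_set, Set.mem_smul_set]
    constructor
    · rintro ⟨p, hp, rfl⟩
      exact ⟨c • p, ⟨p, hp, rfl⟩, by simp [vadd_eq_add, smul_sub]; abel⟩
    · rintro ⟨z, ⟨p, hp, rfl⟩, rfl⟩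
      exact ⟨p, hp, by simp [vadd_eq_add, smul_sub]; abel⟩
  rw [h, measure_vadd, Measure.addHaar_smul, finrank_euclideanSpace_fin, abs_pow]

theorem HasDims.le_volume {C : ℝ} {v : Fin n → ℝ} {V : Set (Space n)} (h : HasDims n C v V) :
    ENNReal.ofReal (|C|⁻¹ ^ n) * ∏ i, ENNReal.ofReal (v i) ≤ volume V := by
  obtain ⟨R, x, hR, hsub, -⟩ := h
  calc ENNReal.ofReal (|C|⁻¹ ^ n) * ∏ i, ENNReal.ofReal (v i) = volume (scaleAbout x C⁻¹ R) := by
        rw [volume_scaleAbout, hR.volume_eq, abs_inv]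
    _ ≤ volume V := measure_mono hsub

theorem IsSlabN.ofReal_div_eight_le_volume {δ : ℝ} {S : Set (Space 3)} {ν : Space 3}
    (h : IsSlabN δ S ν) :
    ENNReal.ofReal (δ / 8) ≤ volume S := by
  have h8 := h.1.le_volume
  simp only [Fin.prod_univ_three, Matrix.cons_val_zero, Matrix.cons_val_one, Matrix.cons_val_two,
    Matrix.head_cons, Matrix.tail_cons, ENNReal.ofReal_one, mul_one] at h8
  rw [← ENNReal.ofReal_mul (by norm_num), abs_two] at h8
  convert h8 using 2
  ring

theorem IsSlabN.div_eight_le_vol {δ : ℝ} {S : Set (Space 3)} {ν : Space 3} (h : IsSlabN δ S ν)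
    (hS : IsBounded S) : δ / 8 ≤ vol S :=
  (ENNReal.ofReal_le_iff_le_toReal hS.measure_lt_top.ne).mp h.ofReal_div_eight_le_volume

theorem volume_shearedBox {a b c₁ c₂ δ r : ℝ} (hb : 0 < b) (hδ : 0 ≤ δ) :
    volume {q : Space 3 | |q 0 - c₁| ≤ δ ∧ |a * q 0 + b * q 1 - c₂| ≤ δ ∧ |q 2| ≤ r} =
      ENNReal.ofReal (8 * δ ^ 2 * r / b) := by
  set M : Matrix (Fin 3) (Fin 3) ℝ := !![1, 0, 0; a, b, 0; 0, 0, 1]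
  have hpre : {q : Space 3 | |q 0 - c₁| ≤ δ ∧ |a * q 0 + b * q 1 - c₂| ≤ δ ∧ |q 2| ≤ r} =
      Matrix.toLpLin 2 2 M ⁻¹'
        {p | ∀ i, p i ∈ Set.Icc (![c₁ - δ, c₂ - δ, -r] i) (![c₁ + δ, c₂ + δ, r] i)} := by
    ext q
    simp [Fin.forall_fin_succ, Matrix.toLpLin_apply, M, abs_le, dotProduct, Fin.sum_univ_three,
      add_comm δ]
  have hdet : LinearMap.det (Matrix.toLpLin 2 2 M) = b := by
    simp [M, Matrix.det_fin_three]
  rw [hpre, Measure.addHaar_preimage_linearMap _ (by rw [hdet]; exact hb.ne'),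
    volume_setOf_forall_mem_Icc, hdet, Fin.prod_univ_three]
  simp only [Matrix.cons_val_zero, Matrix.cons_val_one, Matrix.cons_val_two,
    Matrix.head_cons, Matrix.tail_cons]
  rw [show c₁ + δ - (c₁ - δ) = 2 * δ by ring, show c₂ + δ - (c₂ - δ) = 2 * δ by ring,
    sub_neg_eq_add, ← ENNReal.ofReal_mul (by positivity), ← ENNReal.ofReal_mul (by positivity),
    ← ENNReal.ofReal_mul (by positivity), abs_inv, abs_of_pos hb]
  congr 1
  ring

end Volume

theorem MeasureTheory.lintegral_sq_le_measure_univ_mul {α : Type*} [MeasurableSpace α]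
    (μ : Measure α) {f : α → ℝ≥0∞} (hf : AEMeasurable f μ) :
    (∫⁻ x, f x ∂μ) ^ 2 ≤ μ Set.univ * ∫⁻ x, f x ^ 2 ∂μ := by
  have h := ENNReal.lintegral_mul_le_Lp_mul_Lq μ Real.HolderConjugate.two_two hf aemeasurable_const
    (g := 1)
  simp only [Pi.mul_apply, Pi.one_apply, mul_one, ENNReal.rpow_two, lintegral_const] at h
  calc (∫⁻ x, f x ∂μ) ^ 2
      ≤ ((∫⁻ x, f x ^ 2 ∂μ) ^ (2⁻¹ : ℝ) * μ Set.univ ^ (2⁻¹ : ℝ)) ^ 2 := by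
        gcongr; simpa [one_div] using h
    _ = μ Set.univ * ∫⁻ x, f x ^ 2 ∂μ := by
        have hsqrt (x : ℝ≥0∞) : (x ^ (2⁻¹ : ℝ)) ^ 2 = x := by
          simpa using ENNReal.rpow_inv_natCast_pow (n := 2) two_ne_zero x
        rw [mul_pow, hsqrt, hsqrt, mul_comm]

theorem MeasureTheory.sq_sum_measure_le_measure_biUnion_mul {α ι : Type*} [MeasurableSpace α]
    (μ : Measure α) (I : Finset ι) {s : ι → Set α} (hs : ∀ i ∈ I, MeasurableSet (s i)) :
    (∑ i ∈ I, μ (s i)) ^ 2 ≤ μ (⋃ i ∈ I, s i) * ∑ i ∈ I, ∑ j ∈ I, μ (s i ∩ s j) := by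
  set U := ⋃ i ∈ I, s i
  set f : α → ℝ≥0∞ := fun x => ∑ i ∈ I, (s i).indicator 1 x
  have hind : ∀ i ∈ I, Measurable ((s i).indicator (1 : α → ℝ≥0∞)) :=
    fun i hi => measurable_one.indicator (hs i hi)
  have hf_int : ∫⁻ x, f x ∂μ.restrict U = ∑ i ∈ I, μ (s i) := by
    rw [lintegral_finsetSum _ hind]
    refine Finset.sum_congr rfl fun i hi => ?_
    rw [lintegral_indicator_one (hs i hi), Measure.restrict_apply (hs i hi),
      Set.inter_eq_left.mpr (Finset.subset_set_biUnion_of_mem hi)]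
  have hf_sq : ∀ x, f x ^ 2 = ∑ i ∈ I, ∑ j ∈ I, (s i ∩ s j).indicator 1 x := by
    intro x
    simp only [f, sq, Finset.sum_mul_sum, Set.inter_indicator_one, Pi.mul_apply]
  have hf_sq_int : ∫⁻ x, f x ^ 2 ∂μ.restrict U ≤ ∑ i ∈ I, ∑ j ∈ I, μ (s i ∩ s j) := by
    simp_rw [hf_sq]
    rw [lintegral_finsetSum _ fun i hi => Finset.measurable_sum _ fun j hj =>
      measurable_one.indicator ((hs i hi).inter (hs j hj))]
    refine Finset.sum_le_sum fun i hi => ?_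
    rw [lintegral_finsetSum _ fun j hj => measurable_one.indicator ((hs i hi).inter (hs j hj))]
    refine Finset.sum_le_sum fun j hj => ?_
    rw [lintegral_indicator_one ((hs i hi).inter (hs j hj))]
    exact Measure.restrict_apply_le _ _
  have hf : Measurable f := Finset.measurable_sum _ hind
  calc (∑ i ∈ I, μ (s i)) ^ 2 = (∫⁻ x, f x ∂μ.restrict U) ^ 2 := by rw [hf_int]
    _ ≤ μ.restrict U Set.univ * ∫⁻ x, f x ^ 2 ∂μ.restrict U :=
        lintegral_sq_le_measure_univ_mul _ hf.aemeasurable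
    _ ≤ μ U * ∑ i ∈ I, ∑ j ∈ I, μ (s i ∩ s j) := by
        rw [Measure.restrict_apply_univ]
        gcongr

theorem MeasureTheory.sq_sum_measureReal_le_measureReal_biUnion_mul {α ι : Type*}
    [MeasurableSpace α] (μ : Measure α) (I : Finset ι) {s : ι → Set α}
    (hs : ∀ i ∈ I, MeasurableSet (s i)) (hU : μ (⋃ i ∈ I, s i) ≠ ∞) :
    (∑ i ∈ I, μ.real (s i)) ^ 2 ≤
      μ.real (⋃ i ∈ I, s i) * ∑ i ∈ I, ∑ j ∈ I, μ.real (s i ∩ s j) := by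
  have hfin : ∀ i ∈ I, μ (s i) ≠ ∞ := fun i hi =>
    measure_ne_top_of_subset (Finset.subset_set_biUnion_of_mem hi) hU
  have hfin₂ : ∀ i ∈ I, ∀ j ∈ I, μ (s i ∩ s j) ≠ ∞ := fun i hi _ _ =>
    measure_ne_top_of_subset Set.inter_subset_left (hfin i hi)
  have hfin_row : ∀ i ∈ I, ∑ j ∈ I, μ (s i ∩ s j) ≠ ∞ := fun i hi =>
    ENNReal.sum_ne_top.mpr (hfin₂ i hi)
  have h := ENNReal.toReal_mono (ENNReal.mul_ne_top hU (ENNReal.sum_ne_top.mpr hfin_row))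
    (sq_sum_measure_le_measure_biUnion_mul μ I hs)
  rw [ENNReal.toReal_pow, ENNReal.toReal_mul, ENNReal.toReal_sum hfin,
    ENNReal.toReal_sum hfin_row] at h
  rwa [Finset.sum_congr rfl fun i hi => ENNReal.toReal_sum (hfin₂ i hi)] at h

section Angle

open InnerProductGeometry Real

theorem sin_lineAngle {n : ℕ} (u v : Space n) : sin (lineAngle u v) = sin (angle u v) := by
  rcases le_total (angle u v) (π - angle u v) with h | h
  · rw [lineAngle, min_eq_left h]
  · rw [lineAngle, min_eq_right h, sin_pi_sub]

theorem lineAngle_le_pi_div_two {n : ℕ} (u v : Space n) : lineAngle u v ≤ π / 2 := by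
  rcases le_total (angle u v) (π / 2) with h | h
  · exact (min_le_left _ _).trans h
  · exact (min_le_right _ _).trans (by linarith)

theorem div_pi_le_sin_angle {n : ℕ} {θ : ℝ} {u v : Space n} (h : θ / 2 ≤ lineAngle u v) :
    θ / π ≤ sin (angle u v) := by
  rcases le_or_gt θ 0 with hθ | hθ
  · exact (div_nonpos_of_nonpos_of_nonneg hθ pi_pos.le).trans (sin_angle_nonneg u v)
  rw [← sin_lineAngle]
  calc θ / π = 2 / π * (θ / 2) := by ring
    _ ≤ 2 / π * lineAngle u v := by gcongr
    _ ≤ sin (lineAngle u v) := mul_le_sin (by linarith) (lineAngle_le_pi_div_two u v)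

variable {E : Type*} [NormedAddCommGroup E] [InnerProductSpace ℝ E] [FiniteDimensional ℝ E]

theorem exists_orthonormalBasis_eq_cos_smul_add_sin_smul {ι : Type*} [Fintype ι] [DecidableEq ι]
    (hE : Module.finrank ℝ E = Fintype.card ι) {i j : ι} (hij : i ≠ j) {u v : E}
    (hu : ‖u‖ = 1) (hv : ‖v‖ = 1) (hsin : sin (angle u v) ≠ 0) :
    ∃ B : OrthonormalBasis ι ℝ E, B i = u ∧ v = cos (angle u v) • B i + sin (angle u v) • B j := by
  set w : E := (sin (angle u v))⁻¹ • (v - cos (angle u v) • u)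
  have hcos : ⟪u, v⟫ = cos (angle u v) := by rw [cos_angle, hu, hv]; simp
  have huw : ⟪u, w⟫ = 0 := by
    simp [w, inner_sub_right, real_inner_smul_right, hu, hcos]
  have hw : ‖w‖ = 1 := by
    have hsq : ‖v - cos (angle u v) • u‖ ^ 2 = sin (angle u v) ^ 2 := by
      rw [norm_sub_sq_real, norm_smul, real_inner_smul_right, real_inner_comm, hcos, hu, hv,
        sin_sq, norm_eq_abs, mul_one, sq_abs]
      ring
    rw [pow_left_inj₀ (norm_nonneg _) (sin_angle_nonneg u v) two_ne_zero] at hsq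
    rw [norm_smul, hsq, norm_inv, norm_eq_abs, abs_of_nonneg (sin_angle_nonneg u v),
      inv_mul_cancel₀ hsin]
  have hv_eq : v = cos (angle u v) • u + sin (angle u v) • w := by
    simp only [w, smul_smul, mul_inv_cancel₀ hsin, one_smul]; abel
  have hon : Orthonormal ℝ (Set.domRestrict {i, j} fun k => if k = i then u else w) := by
    rw [orthonormal_iff_ite]
    rintro ⟨k, hk⟩ ⟨l, hl⟩
    rcases hk with rfl | rfl <;> rcases hl with rfl | rfl <;>
      simp [Subtype.ext_iff, hij, hij.symm, huw, real_inner_comm u w, hu, hw]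
  obtain ⟨B, hB⟩ := hon.exists_orthonormalBasis_extension_of_card_eq hE
  refine ⟨B, by simpa using hB i (by simp), ?_⟩
  rw [hB i (by simp), hB j (by simp)]
  simpa [hij.symm] using hv_eq

end Angle

section Slabs

open InnerProductGeometry Real

theorem volume_le_of_abs_inner_sub_le {ν₁ ν₂ : Space 3} (h₁ : ‖ν₁‖ = 1) (h₂ : ‖ν₂‖ = 1)
    (hsin : 0 < sin (angle ν₁ ν₂)) {δ r c₁ c₂ : ℝ} (hδ : 0 ≤ δ) {A : Set (Space 3)}
    (hA : A ⊆ closedBall 0 r) (hA₁ : ∀ p ∈ A, |⟪p, ν₁⟫ - c₁| ≤ δ)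
    (hA₂ : ∀ p ∈ A, |⟪p, ν₂⟫ - c₂| ≤ δ) :
    volume A ≤ ENNReal.ofReal (8 * δ ^ 2 * r / sin (angle ν₁ ν₂)) := by
  obtain ⟨B, hB₀, hν₂⟩ := exists_orthonormalBasis_eq_cos_smul_add_sin_smul
    (by simp : Module.finrank ℝ (Space 3) = Fintype.card (Fin 3)) (by decide : (0 : Fin 3) ≠ 1)
    h₁ h₂ hsin.ne'
  set T := {q : Space 3 | |q 0 - c₁| ≤ δ ∧
    |cos (angle ν₁ ν₂) * q 0 + sin (angle ν₁ ν₂) * q 1 - c₂| ≤ δ ∧ |q 2| ≤ r}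
  have hAT : A ⊆ B.repr ⁻¹' T := by
    intro p hp
    simp only [T, Set.mem_preimage, Set.mem_ofPred_eq, OrthonormalBasis.repr_apply_apply]
    refine ⟨?_, ?_, ?_⟩
    · simpa [hB₀, real_inner_comm] using hA₁ p hp
    · have hinner : ⟪p, ν₂⟫ = cos (angle ν₁ ν₂) * ⟪B 0, p⟫ + sin (angle ν₁ ν₂) * ⟪B 1, p⟫ := by
        conv_lhs => rw [hν₂]
        simp [inner_add_right, real_inner_smul_right, real_inner_comm]
      exact hinner ▸ hA₂ p hp
    · calc |⟪B 2, p⟫| ≤ ‖B 2‖ * ‖p‖ := abs_real_inner_le_norm _ _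
        _ ≤ r := by simpa [B.orthonormal.1 2] using hA hp
  have hT : MeasurableSet T := by
    simp only [T, Set.ofPred_and]
    exact (measurableSet_le (by fun_prop) measurable_const).inter
        ((measurableSet_le (by fun_prop) measurable_const).inter
          (measurableSet_le (by fun_prop) measurable_const))
  calc volume A ≤ volume (B.repr ⁻¹' T) := measure_mono hAT
    _ = volume T := B.measurePreserving_repr.measure_preimage hT.nullMeasurableSet
    _ = _ := volume_shearedBox hsin hδ

theorem IsSlabN.vol_le_of_subset_inter {δ θ : ℝ} (hδ : 0 ≤ δ) (hθ : 0 < θ)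
    {S₁ S₂ : Set (Space 3)} {ν₁ ν₂ : Space 3} (h₁ : IsSlabN δ S₁ ν₁) (h₂ : IsSlabN δ S₂ ν₂)
    (hangle : θ / 2 ≤ lineAngle ν₁ ν₂) {A : Set (Space 3)} (hA : A ⊆ S₁ ∩ S₂)
    (hA₂ : A ⊆ closedBall 0 2) :
    vol A ≤ 16 * π * δ ^ 2 / θ := by
  obtain ⟨c₁, hc₁⟩ := h₁.2.2
  obtain ⟨c₂, hc₂⟩ := h₂.2.2
  have hsin := div_pi_le_sin_angle hangle
  have hsin_pos : 0 < sin (angle ν₁ ν₂) := (div_pos hθ pi_pos).trans_le hsin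
  refine ENNReal.toReal_le_of_le_ofReal (by positivity) ?_
  calc volume A ≤ ENNReal.ofReal (8 * δ ^ 2 * 2 / sin (angle ν₁ ν₂)) :=
        volume_le_of_abs_inner_sub_le h₁.2.1 h₂.2.1 hsin_pos hδ hA₂
          (fun p hp => hc₁ p (hA hp).1) (fun p hp => hc₂ p (hA hp).2)
    _ ≤ ENNReal.ofReal (16 * π * δ ^ 2 / θ) := by
        refine ENNReal.ofReal_le_ofReal ?_
        rw [div_le_div_iff₀ hsin_pos hθ]
        rw [div_le_iff₀ pi_pos] at hsin
        nlinarith [sq_nonneg δ]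

theorem card_mul_mul_le_sum_vol_shade {n : ℕ} {𝕊 : Finset (Set (Space n))}
    {Y : Set (Space n) → Set (Space n)} {l v : ℝ} (hl : 0 ≤ l) (hv : 0 < v)
    (hvol : ∀ S ∈ 𝕊, v ≤ vol S) (hdens : l ≤ shadeDensity 𝕊 Y) :
    𝕊.card * (l * v) ≤ ∑ S ∈ 𝕊, vol (Y S) := by
  rcases 𝕊.eq_empty_or_nonempty with rfl | hne
  · simp
  have hcard : 𝕊.card * v ≤ ∑ S ∈ 𝕊, vol S := by
    simpa using Finset.card_nsmul_le_sum 𝕊 vol v hvol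
  have hpos : 0 < ∑ S ∈ 𝕊, vol S := (mul_pos (by simpa using hne) hv).trans_le hcard
  calc 𝕊.card * (l * v) = l * (𝕊.card * v) := by ring
    _ ≤ l * ∑ S ∈ 𝕊, vol S := by gcongr
    _ ≤ ∑ S ∈ 𝕊, vol (Y S) := (le_div_iff₀ hpos).mp hdens

theorem mul_sq_div_le_vol_shadeUnion {n : ℕ} {𝕊 : Finset (Set (Space n))}
    {Y : Set (Space n) → Set (Space n)} (hY : IsShading 𝕊 Y)
    (hU : volume (shadeUnion 𝕊 Y) ≠ ∞) (hne : 𝕊.Nonempty) {K m Q : ℝ} (hK : 0 ≤ K)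
    (hm : 0 ≤ m) (hQ : 0 < Q) (hmass : 𝕊.card * m ≤ ∑ S ∈ 𝕊, vol (Y S))
    (htri : K * ∑ S₁ ∈ 𝕊, ∑ S₂ ∈ 𝕊, vol (Y S₁ ∩ Y S₂) ≤ 𝕊.card ^ 2 * Q) :
    K * m ^ 2 / Q ≤ vol (shadeUnion 𝕊 Y) := by
  have hCS : (∑ S ∈ 𝕊, vol (Y S)) ^ 2 ≤
      vol (shadeUnion 𝕊 Y) * ∑ S₁ ∈ 𝕊, ∑ S₂ ∈ 𝕊, vol (Y S₁ ∩ Y S₂) :=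
    sq_sum_measureReal_le_measureReal_biUnion_mul volume 𝕊 (fun S hS => (hY S hS).2) hU
  have hN : 0 < (𝕊.card : ℝ) ^ 2 := by positivity
  have hu : 0 ≤ vol (shadeUnion 𝕊 Y) := ENNReal.toReal_nonneg
  rw [div_le_iff₀ hQ, ← mul_le_mul_iff_right₀ hN]
  calc 𝕊.card ^ 2 * (K * m ^ 2) = K * (𝕊.card * m) ^ 2 := by ring
    _ ≤ K * (∑ S ∈ 𝕊, vol (Y S)) ^ 2 := by gcongr
    _ ≤ K * (vol (shadeUnion 𝕊 Y) * ∑ S₁ ∈ 𝕊, ∑ S₂ ∈ 𝕊, vol (Y S₁ ∩ Y S₂)) := by gcongr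
    _ = vol (shadeUnion 𝕊 Y) * (K * ∑ S₁ ∈ 𝕊, ∑ S₂ ∈ 𝕊, vol (Y S₁ ∩ Y S₂)) := by ring
    _ ≤ vol (shadeUnion 𝕊 Y) * (𝕊.card ^ 2 * Q) := by gcongr
    _ = 𝕊.card ^ 2 * (vol (shadeUnion 𝕊 Y) * Q) := by ring

theorem sum_sum_ite_vol_inter_le {δ θ : ℝ} (hδ : 0 ≤ δ) (hθ : 0 < θ)
    {𝕊 : Finset (Set (Space 3))} {nrm : Set (Space 3) → Space 3} {Y : Set (Space 3) → Set (Space 3)}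
    (hslab : ∀ S ∈ 𝕊, IsSlabN δ S (nrm S)) (hY : IsShading 𝕊 Y)
    (hball : ∀ S ∈ 𝕊, S ⊆ closedBall 0 2) :
    (∑ S₁ ∈ 𝕊, ∑ S₂ ∈ 𝕊,
      if θ / 2 ≤ lineAngle (nrm S₁) (nrm S₂) ∧ lineAngle (nrm S₁) (nrm S₂) ≤ 2 * θ
      then vol (Y S₁ ∩ Y S₂) else 0) ≤ 𝕊.card ^ 2 * (16 * π * δ ^ 2 / θ) := by
  refine (Finset.sum_le_card_nsmul _ _ _ fun S₁ hS₁ => Finset.sum_le_card_nsmul _ _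
    (16 * π * δ ^ 2 / θ) fun S₂ hS₂ => ?_).trans_eq (by simp only [nsmul_eq_mul]; ring)
  split_ifs with hangle
  · exact (hslab S₁ hS₁).vol_le_of_subset_inter hδ hθ (hslab S₂ hS₂) hangle.1
      (Set.inter_subset_inter (hY S₁ hS₁).1 (hY S₂ hS₂).1)
      (Set.inter_subset_left.trans ((hY S₁ hS₁).1.trans (hball S₁ hS₁)))
  · positivity

end Slabs

open Real in
/-- **Lemma 6.3 (L² estimate for slabs)**: there are absolute constants
`C, c > 0` so that if `𝕊` is a family of `δ×1×1` slabs (with assigned unit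
normals) contained in a `θ×1×1` slab `S̃ ⊆ B₂`, shaded with density `≥ δ^η`,
and `θ` is a typical intersection angle
(`Tri_θ(𝕊) ≥ (log 1/δ)^(-C) Tri(𝕊) > 0`), then
`|U(𝕊,Y)| ≥ c (log 1/δ)^(-C) δ^(2η) θ`. -/
theorem slab_L2_estimate :
    ∃ C : ℝ, 0 < C ∧ ∃ c : ℝ, 0 < c ∧
      ∀ δ θ η : ℝ, 0 < δ → δ ≤ θ → θ ≤ 1 → 0 < η →
        ∀ Stilde : Set (Space 3),
          Stilde ⊆ Metric.closedBall (0 : Space 3) 2 →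
          HasDims 3 2 ![θ, 1, 1] Stilde →
          ∀ (𝕊 : Finset (Set (Space 3))) (nrm : Set (Space 3) → Space 3)
            (Y : Set (Space 3) → Set (Space 3)),
            (∀ S ∈ 𝕊, S ⊆ Stilde ∧ IsSlabN δ S (nrm S)) →
            IsShading 𝕊 Y → δ ^ η ≤ shadeDensity 𝕊 Y →
            0 < (∑ S₁ ∈ 𝕊, ∑ S₂ ∈ 𝕊,
                  if θ/2 ≤ lineAngle (nrm S₁) (nrm S₂) ∧
                      lineAngle (nrm S₁) (nrm S₂) ≤ 2*θ
                  then vol (Y S₁ ∩ Y S₂) else 0) →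
            (Real.log (1/δ)) ^ (-C) *
                (∑ S₁ ∈ 𝕊, ∑ S₂ ∈ 𝕊, vol (Y S₁ ∩ Y S₂)) ≤
              (∑ S₁ ∈ 𝕊, ∑ S₂ ∈ 𝕊,
                  if θ/2 ≤ lineAngle (nrm S₁) (nrm S₂) ∧
                      lineAngle (nrm S₁) (nrm S₂) ≤ 2*θ
                  then vol (Y S₁ ∩ Y S₂) else 0) →
            c * (Real.log (1/δ)) ^ (-C) * δ ^ (2*η) * θ ≤
              vol (shadeUnion 𝕊 Y) := by
  refine ⟨1, one_pos, (1024 * π)⁻¹, by positivity, ?_⟩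
  intro δ θ η hδ hδθ hθ₁ _ Stilde hStilde _ 𝕊 nrm Y hslab hY hdens hpos htyp
  have hθ : 0 < θ := hδ.trans_le hδθ
  have hball : ∀ S ∈ 𝕊, S ⊆ closedBall 0 2 := fun S hS => (hslab S hS).1.trans hStilde
  have hU : shadeUnion 𝕊 Y ⊆ closedBall 0 2 :=
    Set.iUnion₂_subset fun S hS => (hY S hS).1.trans (hball S hS)
  have hmass : 𝕊.card * (δ ^ η * (δ / 8)) ≤ ∑ S ∈ 𝕊, vol (Y S) :=
    card_mul_mul_le_sum_vol_shade (by positivity) (by positivity)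
      (fun S hS => (hslab S hS).2.div_eight_le_vol (isBounded_closedBall.subset (hball S hS))) hdens
  have hbound := mul_sq_div_le_vol_shadeUnion hY
    (measure_ne_top_of_subset hU measure_closedBall_lt_top.ne)
    (Finset.nonempty_of_sum_ne_zero hpos.ne')
    (rpow_nonneg (log_nonneg (one_le_one_div hδ (hδθ.trans hθ₁))) (-1)) (by positivity)
    (by positivity) hmass
    (htyp.trans (sum_sum_ite_vol_inter_le hδ.le hθ (fun S hS => (hslab S hS).2) hY hball))
  refine le_of_eq_of_le ?_ hbound
  rw [show 2 * η = η * (2 : ℕ) by norm_num [mul_comm], rpow_mul_natCast hδ.le]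
  field_simp
  ring
end
end
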